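/- Let p : Ω → Λ be a covering of k-graphs, x a vertex of Λ, and v a vertex of Ω with p(v) = x, and let 𝒢(Λ) act on Ω⁰ by the corresponding action. Then the induced functor p_* restricts to a group isomorphism from the fundamental group π(Ω,v) onto the stability group S_v = {a ∈ π(Λ,x) : av = v} of the action; in particular p_* is injective on π(Ω,v) and its image equals S_v. -/

import Mathlib

/-!
Arrows-only formalization of `k`-graphs (higher-rank graphs), their coverings,
fundamental groupoids, and groupoid actions, following Pask–Quigg–Raeburn,
"Coverings of k-graphs".

A small category is encoded by its set of arrows `A` together with
source/range maps `src rng : A → A` (whose common image is the set of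
identities = vertices) and a (guarded) total composition `comp : A → A → A`,
where `comp f g` is the composite "f after g", meaningful when `src f = rng g`.
A `k`-graph additionally has a degree map `deg : A → (Fin k → ℕ)` which is
functorial and satisfies the unique factorization property.
-/

namespace KGraphCovering

/-- A `k`-graph in arrows-only form. -/
structure KGraphStruct (k : ℕ) (A : Type) : Type where
  src : A → A
  rng : A → A
  comp : A → A → A
  deg : A → (Fin k → ℕ)
  src_src : ∀ f, src (src f) = src f
  rng_src : ∀ f, rng (src f) = src f
  src_rng : ∀ f, src (rng f) = rng f
  rng_rng : ∀ f, rng (rng f) = rng f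
  comp_src_id : ∀ f, comp f (src f) = f
  rng_comp_id : ∀ f, comp (rng f) f = f
  src_comp : ∀ f g, src f = rng g → src (comp f g) = src g
  rng_comp : ∀ f g, src f = rng g → rng (comp f g) = rng f
  assoc : ∀ f g h, src f = rng g → src g = rng h →
    comp (comp f g) h = comp f (comp g h)
  deg_comp : ∀ f g, src f = rng g → deg (comp f g) = deg f + deg g
  deg_src : ∀ f, deg (src f) = 0
  factor : ∀ f m n, deg f = m + n →
    ∃! q : A × A, src q.1 = rng q.2 ∧ deg q.1 = m ∧ deg q.2 = n ∧ comp q.1 q.2 = f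

namespace KGraphStruct

variable {k : ℕ} {A : Type}

/-- The vertices (objects) are the identity arrows. -/
def IsVertex (S : KGraphStruct k A) (v : A) : Prop := S.src v = v

/-- A `k`-graph is connected if the equivalence relation generated by
"there is a morphism from `v` to `u`" relates all pairs of vertices. -/
def Connected (S : KGraphStruct k A) : Prop :=
  ∀ u v, S.IsVertex u → S.IsVertex v →
    Relation.EqvGen (fun a b => ∃ f, S.rng f = a ∧ S.src f = b) u v

end KGraphStruct

/-- A groupoid in arrows-only form. -/
structure GroupoidStruct (B : Type) : Type where
  src : B → B
  rng : B → B
  comp : B → B → B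
  inv : B → B
  src_src : ∀ f, src (src f) = src f
  rng_src : ∀ f, rng (src f) = src f
  src_rng : ∀ f, src (rng f) = rng f
  rng_rng : ∀ f, rng (rng f) = rng f
  comp_src_id : ∀ f, comp f (src f) = f
  rng_comp_id : ∀ f, comp (rng f) f = f
  src_comp : ∀ f g, src f = rng g → src (comp f g) = src g
  rng_comp : ∀ f g, src f = rng g → rng (comp f g) = rng f
  assoc : ∀ f g h, src f = rng g → src g = rng h →
    comp (comp f g) h = comp f (comp g h)
  src_inv : ∀ f, src (inv f) = rng f
  rng_inv : ∀ f, rng (inv f) = src f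
  inv_comp_self : ∀ f, comp (inv f) f = src f
  comp_inv_self : ∀ f, comp f (inv f) = rng f

namespace GroupoidStruct

variable {B : Type}

/-- The vertices (objects) of a groupoid are the identity arrows. -/
def IsVertex (G : GroupoidStruct B) (v : B) : Prop := G.src v = v

/-- A subgroup of the isotropy group `x𝒢x`, as a set of arrows. -/
def IsSubgroupAt (G : GroupoidStruct B) (x : B) (H : Set B) : Prop :=
  (∀ a ∈ H, G.src a = x ∧ G.rng a = x) ∧ x ∈ H ∧
  (∀ a ∈ H, ∀ b ∈ H, G.comp a b ∈ H) ∧ (∀ a ∈ H, G.inv a ∈ H)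

/-- `K` is a conjugate of `H` in the isotropy group at `x`. -/
def ConjAt (G : GroupoidStruct B) (x : B) (H K : Set B) : Prop :=
  ∃ g, G.src g = x ∧ G.rng g = x ∧
    K = (fun a => G.comp (G.comp g a) (G.inv g)) '' H

/-- `H` is a normal subset of the isotropy group at `x`. -/
def IsNormalAt (G : GroupoidStruct B) (x : B) (H : Set B) : Prop :=
  ∀ g, G.src g = x → G.rng g = x → ∀ a ∈ H, G.comp (G.comp g a) (G.inv g) ∈ H

/-- The normalizer of `H` in the isotropy group at `x`. -/
def normalizerAt (G : GroupoidStruct B) (x : B) (H : Set B) : Set B :=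
  {g | G.src g = x ∧ G.rng g = x ∧
    (fun a => G.comp (G.comp g a) (G.inv g)) '' H = H}

end GroupoidStruct

/-- `f` is a morphism of `k`-graphs (a degree-preserving functor). -/
def IsKGraphHomFun {k : ℕ} {A A' : Type} (S : KGraphStruct k A)
    (T : KGraphStruct k A') (f : A → A') : Prop :=
  (∀ a, f (S.src a) = T.src (f a)) ∧
  (∀ a, f (S.rng a) = T.rng (f a)) ∧
  (∀ a b, S.src a = S.rng b → f (S.comp a b) = T.comp (f a) (f b)) ∧
  (∀ a, T.deg (f a) = S.deg a)

/-- `f` is a functor from a `k`-graph to a groupoid. -/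
def IsFunctorToGpdFun {k : ℕ} {A B : Type} (S : KGraphStruct k A)
    (G : GroupoidStruct B) (f : A → B) : Prop :=
  (∀ a, f (S.src a) = G.src (f a)) ∧
  (∀ a, f (S.rng a) = G.rng (f a)) ∧
  (∀ a b, S.src a = S.rng b → f (S.comp a b) = G.comp (f a) (f b))

/-- `f` is a morphism of groupoids (a functor). -/
def IsGpdHomFun {B C : Type} (G : GroupoidStruct B) (H : GroupoidStruct C)
    (f : B → C) : Prop :=
  (∀ a, f (G.src a) = H.src (f a)) ∧
  (∀ a, f (G.rng a) = H.rng (f a)) ∧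
  (∀ a b, G.src a = G.rng b → f (G.comp a b) = H.comp (f a) (f b))

/-- `p : Ω → Λ` is a covering of `k`-graphs: a surjective `k`-graph morphism
which maps `Ωv` bijectively onto `Λp(v)` and `vΩ` bijectively onto `p(v)Λ`
for every vertex `v` of `Ω`. -/
structure IsCovering {k : ℕ} {A A' : Type} (S : KGraphStruct k A')
    (T : KGraphStruct k A) (p : A' → A) : Prop where
  hom : IsKGraphHomFun S T p
  surj : Function.Surjective p
  src_inj : ∀ a b, S.src a = S.src b → p a = p b → a = b
  src_lift : ∀ v, S.IsVertex v → ∀ g, T.src g = p v → ∃ a, S.src a = v ∧ p a = g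
  rng_inj : ∀ a b, S.rng a = S.rng b → p a = p b → a = b
  rng_lift : ∀ v, S.IsVertex v → ∀ g, T.rng g = p v → ∃ a, S.rng a = v ∧ p a = g

/-- A fundamental groupoid of a `k`-graph `S`: a groupoid `G` whose object
set is identified with the vertex set of `S` via the canonical functor `i`
(which is bijective on objects), with the universal property that every
functor from `S` to a groupoid factors uniquely through `i`. -/
structure FundamentalGroupoid {k : ℕ} {A : Type} (S : KGraphStruct k A) :
    Type 1 where
  B : Type
  G : GroupoidStruct B
  i : A → B
  i_hom : IsFunctorToGpdFun S G i
  obj_bij : ∀ w, G.IsVertex w → ∃! v, S.IsVertex v ∧ i v = w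
  univ : ∀ {C : Type} (H : GroupoidStruct C) (F : A → C),
    IsFunctorToGpdFun S H F →
    ∃! F' : B → C, IsGpdHomFun G H F' ∧ ∀ a, F' (i a) = F a

/-- The fundamental group `π(Λ,x)` at a vertex `x`, as the isotropy of the
fundamental groupoid at `i x`. -/
def FundamentalGroupoid.pi1 {k : ℕ} {A : Type} {S : KGraphStruct k A}
    (F : FundamentalGroupoid S) (x : A) : Set F.B :=
  {a | F.G.src a = F.i x ∧ F.G.rng a = F.i x}

/-- An automorphism of the covering `p : Ω → Λ`. -/
def IsCoveringAut {k : ℕ} {A A' : Type} (Ω : KGraphStruct k A')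
    (Λ : KGraphStruct k A) (p : A' → A) (φ : A' → A') : Prop :=
  Function.Bijective φ ∧ IsKGraphHomFun Ω Ω φ ∧ ∀ a, p (φ a) = p a

/-- The action of the fundamental groupoid `F = 𝒢(Λ)` on the vertex set of a
covering `p : Ω → Λ`, determined by `i(p(λ)) ⬝ s(λ) = r(λ)`.  The fiber of a
vertex `w` of `Ω` is over the object `F.i (p w)`. -/
structure CorrespondingAction {k : ℕ} {A A' : Type} (Ω : KGraphStruct k A')
    (Λ : KGraphStruct k A) (F : FundamentalGroupoid Λ) (p : A' → A)
    (act : F.B → A' → A') : Prop where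
  act_vertex : ∀ a w, Ω.IsVertex w → F.G.src a = F.i (p w) →
    Ω.IsVertex (act a w) ∧ F.i (p (act a w)) = F.G.rng a
  act_id : ∀ w, Ω.IsVertex w → act (F.i (p w)) w = w
  act_comp : ∀ a b w, Ω.IsVertex w → F.G.src b = F.i (p w) →
    F.G.src a = F.G.rng b → act (F.G.comp a b) w = act a (act b w)
  act_cov : ∀ lam, act (F.i (p lam)) (Ω.src lam) = Ω.rng lam

/-- An action of a groupoid `G` on a set `V`, presented by an anchor map
`fib : V → B` (landing in vertices) and a guarded action map. -/
structure GpdActionStruct {B : Type} (G : GroupoidStruct B) (V : Type) :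
    Type where
  fib : V → B
  act : B → V → V
  fib_vertex : ∀ v, G.src (fib v) = fib v
  act_fib : ∀ a v, G.src a = fib v → fib (act a v) = G.rng a
  act_id : ∀ v, act (fib v) v = v
  act_comp : ∀ a b v, G.src b = fib v → G.src a = G.rng b →
    act (G.comp a b) v = act a (act b v)

namespace GpdActionStruct

variable {B V W : Type} {G : GroupoidStruct B}

/-- Transitivity of a groupoid action. -/
def Transitive (ρ : GpdActionStruct G V) : Prop :=
  ∀ u v : V, ∃ a, G.src a = ρ.fib v ∧ ρ.act a v = u

/-- The stability group of the action at `v`. -/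
def stab (ρ : GpdActionStruct G V) (v : V) : Set B :=
  {a | G.src a = ρ.fib v ∧ G.rng a = ρ.fib v ∧ ρ.act a v = v}

/-- Freeness of a groupoid action: all stability groups are trivial. -/
def Free (ρ : GpdActionStruct G V) : Prop :=
  ∀ (v : V) (a : B), a ∈ ρ.stab v → a = ρ.fib v

end GpdActionStruct

/-- A morphism of actions of the groupoid `G`: a fiber-preserving
equivariant map. -/
def IsActionHom {B V W : Type} {G : GroupoidStruct B}
    (ρ : GpdActionStruct G V) (σ : GpdActionStruct G W) (φ : V → W) : Prop :=
  (∀ v, σ.fib (φ v) = ρ.fib v) ∧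
  ∀ a v, G.src a = ρ.fib v → φ (ρ.act a v) = σ.act a (φ v)

/-- An automorphism of an action of the groupoid `G`. -/
def IsActionAut {B V : Type} {G : GroupoidStruct B}
    (ρ : GpdActionStruct G V) (φ : V → V) : Prop :=
  Function.Bijective φ ∧ IsActionHom ρ ρ φ

/-- A universal covering: a connected covering admitting a morphism of
coverings to every connected covering of the base. -/
def IsUniversalCovering {k : ℕ} {A A' : Type} (Ω : KGraphStruct k A')
    (Λ : KGraphStruct k A) (p : A' → A) : Prop :=
  IsCovering Ω Λ p ∧ Ω.Connected ∧
  ∀ (A'' : Type) (Sg : KGraphStruct k A'') (q : A'' → A),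
    IsCovering Sg Λ q → Sg.Connected →
    ∃ φ : A' → A'', IsKGraphHomFun Ω Sg φ ∧ ∀ a, q (φ a) = p a

end KGraphCovering

/-!
Every arrow `α` of `Λ` lifts uniquely to an arrow of `Ω` with any prescribed source over
`s(α)`. Recording all these lifts turns `α` into an arrow of an auxiliary groupoid, whose arrows
are arrows `a` of `𝒢(Λ)` together with, for each vertex `w` over `s(a)`, an arrow `w → a·w` of
`𝒢(Ω)` over `a`. The universal property of `𝒢(Λ)` extends this to all of `𝒢(Λ)`: each `a`
lifts at each `w` over its source to an arrow ending at `a·w`. This gives `S_v ⊆ p_*π(Ω,v)`.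
Conversely, induction over the generators of `𝒢(Ω)` shows that the lift of `p_* c` at the
source of `c` is `c` itself. This gives injectivity of `p_*` and the inclusion
`p_*π(Ω,v) ⊆ S_v`.
-/

namespace KGraphCovering

theorem KGraphStruct.IsVertex.rng_eq {k : ℕ} {A : Type} {S : KGraphStruct k A} {v : A}
    (hv : S.IsVertex v) : S.rng v = v := by
  rw [← hv, S.rng_src]

section GroupoidHom

variable {B C D : Type} {G : GroupoidStruct B} {H : GroupoidStruct C} {K : GroupoidStruct D}

theorem isGpdHomFun_id : IsGpdHomFun G G (fun b => b) :=
  ⟨fun _ => rfl, fun _ => rfl, fun _ _ _ => rfl⟩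

theorem IsGpdHomFun.comp {f : B → C} {g : C → D} (hg : IsGpdHomFun H K g)
    (hf : IsGpdHomFun G H f) : IsGpdHomFun G K (fun b => g (f b)) :=
  ⟨fun a => by dsimp only; rw [hf.1, hg.1], fun a => by dsimp only; rw [hf.2.1, hg.2.1],
    fun a b hab => by dsimp only; rw [hf.2.2 a b hab, hg.2.2 _ _ (by rw [← hf.1, ← hf.2.1, hab])]⟩

theorem IsGpdHomFun.map_inv {f : B → C} (hf : IsGpdHomFun G H f) (a : B) :
    f (G.inv a) = H.inv (f a) := by
  have hsrc : H.src (f (G.inv a)) = H.rng (f a) := by rw [← hf.1, G.src_inv, hf.2.1]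
  have hcancel : H.comp (f (G.inv a)) (f a) = H.src (f a) := by
    rw [← hf.2.2 _ _ (G.src_inv a), G.inv_comp_self, hf.1]
  calc f (G.inv a) = H.comp (f (G.inv a)) (H.comp (f a) (H.inv (f a))) := by
        rw [H.comp_inv_self, ← hsrc, H.comp_src_id]
    _ = H.comp (H.src (f a)) (H.inv (f a)) := by
        rw [← H.assoc _ _ _ hsrc (H.rng_inv (f a)).symm, hcancel]
    _ = H.inv (f a) := by rw [← H.rng_inv, H.rng_comp_id]

end GroupoidHom

namespace GroupoidStruct

variable {B : Type} (G : GroupoidStruct B) (P : B → Prop)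
  (hcomp : ∀ a b, G.src a = G.rng b → P a → P b → P (G.comp a b))
  (hinv : ∀ a, P a → P (G.inv a))

open scoped Classical in
noncomputable def restrict : GroupoidStruct {b // P b} where
  src f := ⟨G.src f.1, G.inv_comp_self f.1 ▸ hcomp _ _ (G.src_inv f.1) (hinv _ f.2) f.2⟩
  rng f := ⟨G.rng f.1, G.comp_inv_self f.1 ▸ hcomp _ _ (G.rng_inv f.1).symm f.2 (hinv _ f.2)⟩
  comp f g := if h : G.src f.1 = G.rng g.1 then ⟨G.comp f.1 g.1, hcomp _ _ h f.2 g.2⟩ else f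
  inv f := ⟨G.inv f.1, hinv _ f.2⟩
  src_src f := Subtype.ext (G.src_src f.1)
  rng_src f := Subtype.ext (G.rng_src f.1)
  src_rng f := Subtype.ext (G.src_rng f.1)
  rng_rng f := Subtype.ext (G.rng_rng f.1)
  comp_src_id f := by
    rw [dif_pos (G.rng_src f.1).symm]
    exact Subtype.ext (G.comp_src_id f.1)
  rng_comp_id f := by
    rw [dif_pos (G.src_rng f.1)]
    exact Subtype.ext (G.rng_comp_id f.1)
  src_comp f g h := by
    have h' : G.src f.1 = G.rng g.1 := congrArg Subtype.val h
    rw [dif_pos h']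
    exact Subtype.ext (G.src_comp f.1 g.1 h')
  rng_comp f g h := by
    have h' : G.src f.1 = G.rng g.1 := congrArg Subtype.val h
    rw [dif_pos h']
    exact Subtype.ext (G.rng_comp f.1 g.1 h')
  assoc f g h hfg hgh := by
    have h1 : G.src f.1 = G.rng g.1 := congrArg Subtype.val hfg
    have h2 : G.src g.1 = G.rng h.1 := congrArg Subtype.val hgh
    rw [dif_pos h1, dif_pos h2, dif_pos (by rw [G.src_comp _ _ h1, h2]),
      dif_pos (by rw [h1, G.rng_comp _ _ h2])]
    exact Subtype.ext (G.assoc f.1 g.1 h.1 h1 h2)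
  src_inv f := Subtype.ext (G.src_inv f.1)
  rng_inv f := Subtype.ext (G.rng_inv f.1)
  inv_comp_self f := by
    rw [dif_pos (G.src_inv f.1)]
    exact Subtype.ext (G.inv_comp_self f.1)
  comp_inv_self f := by
    rw [dif_pos (G.rng_inv f.1).symm]
    exact Subtype.ext (G.comp_inv_self f.1)

theorem restrict_comp {f g : {b // P b}} (h : G.src f.1 = G.rng g.1) :
    ((G.restrict P hcomp hinv).comp f g).1 = G.comp f.1 g.1 := by
  simp only [restrict, dif_pos h]

theorem isGpdHomFun_restrict_val : IsGpdHomFun (G.restrict P hcomp hinv) G Subtype.val :=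
  ⟨fun _ => rfl, fun _ => rfl,
    fun _ _ h => G.restrict_comp P hcomp hinv (congrArg Subtype.val h)⟩

end GroupoidStruct

namespace FundamentalGroupoid

variable {k : ℕ} {A : Type} {S : KGraphStruct k A} (F : FundamentalGroupoid S)

theorem src_i {v : A} (hv : S.IsVertex v) : F.G.src (F.i v) = F.i v := by
  rw [← F.i_hom.1, hv]

theorem rng_i {v : A} (hv : S.IsVertex v) : F.G.rng (F.i v) = F.i v := by
  rw [← F.i_hom.2.1, hv.rng_eq]

theorem i_inj {v v' : A} (hv : S.IsVertex v) (hv' : S.IsVertex v') (h : F.i v = F.i v') :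
    v = v' := by
  obtain ⟨w, -, hw⟩ := F.obj_bij (F.i v) (F.src_i hv)
  exact (hw v ⟨hv, rfl⟩).trans (hw v' ⟨hv', h.symm⟩).symm

theorem hom_ext {C : Type} {H : GroupoidStruct C} {f g : F.B → C}
    (hf : IsGpdHomFun F.G H f) (hg : IsGpdHomFun F.G H g) (h : ∀ α, f (F.i α) = g (F.i α)) :
    f = g := by
  have hgi : IsFunctorToGpdFun S H (fun α => g (F.i α)) :=
    ⟨fun α => by dsimp only; rw [F.i_hom.1, hg.1],
      fun α => by dsimp only; rw [F.i_hom.2.1, hg.2.1],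
      fun α β h => by
        dsimp only
        rw [F.i_hom.2.2 α β h, hg.2.2 _ _ (by rw [← F.i_hom.1, ← F.i_hom.2.1, h])]⟩
  exact (F.univ H _ hgi).unique ⟨hf, h⟩ ⟨hg, fun _ => rfl⟩

@[elab_as_elim]
theorem induction_on {P : F.B → Prop} (b : F.B) (base : ∀ α, P (F.i α))
    (comp : ∀ a b, F.G.src a = F.G.rng b → P a → P b → P (F.G.comp a b))
    (inv : ∀ a, P a → P (F.G.inv a)) : P b := by
  set R := F.G.restrict P comp inv
  have hj : IsFunctorToGpdFun S R (fun α => ⟨F.i α, base α⟩) :=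
    ⟨fun α => Subtype.ext (F.i_hom.1 α), fun α => Subtype.ext (F.i_hom.2.1 α),
      fun α β h => Subtype.ext <| by
        rw [F.G.restrict_comp P comp inv (by rw [← F.i_hom.1, ← F.i_hom.2.1, h])]
        exact F.i_hom.2.2 α β h⟩
  obtain ⟨j, ⟨hj, hji⟩, -⟩ := F.univ R _ hj
  have hval : (fun b => (j b).1) = fun b => b :=
    F.hom_ext ((F.G.isGpdHomFun_restrict_val P comp inv).comp hj) isGpdHomFun_id
      (fun α => by rw [hji])
  exact congrFun hval b ▸ (j b).2

end FundamentalGroupoid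

section Covering

variable {k : ℕ} {A A' : Type} {Λ : KGraphStruct k A} {Ω : KGraphStruct k A'}
  {FΛ : FundamentalGroupoid Λ} {FΩ : FundamentalGroupoid Ω} {p : A' → A}
  {pst : FΩ.B → FΛ.B} {act : FΛ.B → A' → A'}

variable (Ω FΛ p) in
/-- The vertices on which `a` acts. -/
def OverSrc (a : FΛ.B) (w : A') : Prop := Ω.IsVertex w ∧ FΛ.G.src a = FΛ.i (p w)

theorem overSrc_src_iff {a : FΛ.B} {w : A'} :
    OverSrc Ω FΛ p (FΛ.G.src a) w ↔ OverSrc Ω FΛ p a w := by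
  rw [OverSrc, OverSrc, FΛ.G.src_src]

theorem overSrc_comp_iff {a b : FΛ.B} (h : FΛ.G.src a = FΛ.G.rng b) {w : A'} :
    OverSrc Ω FΛ p (FΛ.G.comp a b) w ↔ OverSrc Ω FΛ p b w := by
  rw [OverSrc, OverSrc, FΛ.G.src_comp a b h]

theorem overSrc_i_iff (hp : IsCovering Ω Λ p) {α : A} {w : A'} :
    OverSrc Ω FΛ p (FΛ.i α) w ↔ ∃ l, Ω.src l = w ∧ p l = α := by
  constructor
  · rintro ⟨hw, hαw⟩
    have hpw : Λ.IsVertex (p w) := by rw [KGraphStruct.IsVertex, ← hp.hom.1, hw]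
    exact hp.src_lift w hw α (FΛ.i_inj (Λ.src_src α) hpw (by rw [FΛ.i_hom.1, hαw]))
  · rintro ⟨l, rfl, rfl⟩
    exact ⟨Ω.src_src l, by rw [← FΛ.i_hom.1, ← hp.hom.1]⟩

namespace CorrespondingAction

theorem overSrc_act (hact : CorrespondingAction Ω Λ FΛ p act) {a b : FΛ.B} {w : A'}
    (h : OverSrc Ω FΛ p a w) (hb : FΛ.G.src b = FΛ.G.rng a) : OverSrc Ω FΛ p b (act a w) :=
  ⟨(hact.act_vertex a w h.1 h.2).1, by rw [hb, (hact.act_vertex a w h.1 h.2).2]⟩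

theorem act_of_src_eq (hact : CorrespondingAction Ω Λ FΛ p act) {e : FΛ.B}
    (he : FΛ.G.src e = e) {w : A'} (h : OverSrc Ω FΛ p e w) : act e w = w := by
  rw [← he, h.2, hact.act_id w h.1]

theorem act_inv_act (hact : CorrespondingAction Ω Λ FΛ p act) {a : FΛ.B} {w : A'}
    (h : OverSrc Ω FΛ p a w) : act (FΛ.G.inv a) (act a w) = w := by
  rw [← hact.act_comp _ _ w h.1 h.2 (FΛ.G.src_inv a), FΛ.G.inv_comp_self,
    hact.act_of_src_eq (FΛ.G.src_src a) (overSrc_src_iff.2 h)]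

theorem act_act_inv (hact : CorrespondingAction Ω Λ FΛ p act) {a : FΛ.B} {w : A'}
    (h : OverSrc Ω FΛ p (FΛ.G.inv a) w) : act a (act (FΛ.G.inv a) w) = w := by
  rw [← hact.act_comp _ _ w h.1 h.2 (FΛ.G.rng_inv a).symm, FΛ.G.comp_inv_self,
    hact.act_of_src_eq (FΛ.G.src_rng a)]
  exact ⟨h.1, by rw [FΛ.G.src_rng, ← FΛ.G.src_inv, h.2]⟩

end CorrespondingAction

variable (FΛ FΩ p pst act) in
/-- An arrow `a` of `𝒢(Λ)` together with, for each vertex `w` over its source, an arrow of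
`𝒢(Ω)` from `w` to `a·w` lying over `a`; `lift` is normalised to `i w` off that fiber. -/
@[ext]
structure LiftFamily where
  base : FΛ.B
  lift : A' → FΩ.B
  src_lift : ∀ w, OverSrc Ω FΛ p base w → FΩ.G.src (lift w) = FΩ.i w
  rng_lift : ∀ w, OverSrc Ω FΛ p base w → FΩ.G.rng (lift w) = FΩ.i (act base w)
  pst_lift : ∀ w, OverSrc Ω FΛ p base w → pst (lift w) = base
  lift_of_not : ∀ w, ¬ OverSrc Ω FΛ p base w → lift w = FΩ.i w

namespace LiftFamily

theorem ext_of_overSrc {t s : LiftFamily FΛ FΩ p pst act} (hbase : t.base = s.base)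
    (hlift : ∀ w, OverSrc Ω FΛ p t.base w → t.lift w = s.lift w) : t = s := by
  refine LiftFamily.ext hbase (funext fun w => ?_)
  by_cases hw : OverSrc Ω FΛ p t.base w
  · exact hlift w hw
  · rw [t.lift_of_not w hw, s.lift_of_not w (hbase ▸ hw)]

variable (hpst : IsGpdHomFun FΩ.G FΛ.G pst) (hpsti : ∀ a, pst (FΩ.i a) = FΛ.i (p a))
  (hact : CorrespondingAction Ω Λ FΛ p act)

def ofObj (e : FΛ.B) (he : FΛ.G.src e = e) : LiftFamily FΛ FΩ p pst act where
  base := e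
  lift := FΩ.i
  src_lift w hw := FΩ.src_i hw.1
  rng_lift w hw := by rw [FΩ.rng_i hw.1, hact.act_of_src_eq he hw]
  pst_lift w hw := by rw [hpsti, ← hw.2, he]
  lift_of_not _ _ := rfl

open scoped Classical in
noncomputable def comp (t s : LiftFamily FΛ FΩ p pst act)
    (h : FΛ.G.src t.base = FΛ.G.rng s.base) : LiftFamily FΛ FΩ p pst act where
  base := FΛ.G.comp t.base s.base
  lift w := if OverSrc Ω FΛ p s.base w then FΩ.G.comp (t.lift (act s.base w)) (s.lift w)
    else FΩ.i w
  src_lift w hw := by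
    have hw := (overSrc_comp_iff h).1 hw
    have hw' := hact.overSrc_act hw h
    rw [if_pos hw, FΩ.G.src_comp _ _ (by rw [t.src_lift _ hw', s.rng_lift w hw]),
      s.src_lift w hw]
  rng_lift w hw := by
    have hw := (overSrc_comp_iff h).1 hw
    have hw' := hact.overSrc_act hw h
    rw [if_pos hw, FΩ.G.rng_comp _ _ (by rw [t.src_lift _ hw', s.rng_lift w hw]),
      t.rng_lift _ hw', hact.act_comp _ _ w hw.1 hw.2 h]
  pst_lift w hw := by
    have hw := (overSrc_comp_iff h).1 hw
    have hw' := hact.overSrc_act hw h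
    rw [if_pos hw, hpst.2.2 _ _ (by rw [t.src_lift _ hw', s.rng_lift w hw]),
      t.pst_lift _ hw', s.pst_lift w hw]
  lift_of_not w hw := if_neg fun hw' => hw ((overSrc_comp_iff h).2 hw')

open scoped Classical in
noncomputable def inv (t : LiftFamily FΛ FΩ p pst act) : LiftFamily FΛ FΩ p pst act where
  base := FΛ.G.inv t.base
  lift w := if OverSrc Ω FΛ p (FΛ.G.inv t.base) w
    then FΩ.G.inv (t.lift (act (FΛ.G.inv t.base) w)) else FΩ.i w
  src_lift w hw := by
    have hw' := hact.overSrc_act hw (FΛ.G.rng_inv _).symm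
    rw [if_pos hw, FΩ.G.src_inv, t.rng_lift _ hw', hact.act_act_inv hw]
  rng_lift w hw := by
    rw [if_pos hw, FΩ.G.rng_inv, t.src_lift _ (hact.overSrc_act hw (FΛ.G.rng_inv _).symm)]
  pst_lift w hw := by
    rw [if_pos hw, hpst.map_inv, t.pst_lift _ (hact.overSrc_act hw (FΛ.G.rng_inv _).symm)]
  lift_of_not w hw := if_neg hw

open scoped Classical in
noncomputable def compOrLeft (t s : LiftFamily FΛ FΩ p pst act) : LiftFamily FΛ FΩ p pst act :=
  if h : FΛ.G.src t.base = FΛ.G.rng s.base then comp hpst hact t s h else t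

theorem compOrLeft_of_eq {t s : LiftFamily FΛ FΩ p pst act}
    (h : FΛ.G.src t.base = FΛ.G.rng s.base) :
    compOrLeft hpst hact t s = comp hpst hact t s h :=
  dif_pos h

theorem comp_base {t s : LiftFamily FΛ FΩ p pst act} (h : FΛ.G.src t.base = FΛ.G.rng s.base) :
    (comp hpst hact t s h).base = FΛ.G.comp t.base s.base := rfl

theorem inv_base (t : LiftFamily FΛ FΩ p pst act) :
    (inv hpst hact t).base = FΛ.G.inv t.base := rfl

theorem comp_lift {t s : LiftFamily FΛ FΩ p pst act} (h : FΛ.G.src t.base = FΛ.G.rng s.base)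
    {w : A'} (hw : OverSrc Ω FΛ p s.base w) :
    (comp hpst hact t s h).lift w = FΩ.G.comp (t.lift (act s.base w)) (s.lift w) :=
  if_pos hw

theorem inv_lift {t : LiftFamily FΛ FΩ p pst act} {w : A'}
    (hw : OverSrc Ω FΛ p (FΛ.G.inv t.base) w) :
    (inv hpst hact t).lift w = FΩ.G.inv (t.lift (act (FΛ.G.inv t.base) w)) :=
  if_pos hw

noncomputable def groupoid : GroupoidStruct (LiftFamily FΛ FΩ p pst act) where
  src t := ofObj hpsti hact (FΛ.G.src t.base) (FΛ.G.src_src _)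
  rng t := ofObj hpsti hact (FΛ.G.rng t.base) (FΛ.G.src_rng _)
  comp := compOrLeft hpst hact
  inv := inv hpst hact
  src_src t := LiftFamily.ext (FΛ.G.src_src _) rfl
  rng_src t := LiftFamily.ext (FΛ.G.rng_src _) rfl
  src_rng t := LiftFamily.ext (FΛ.G.src_rng _) rfl
  rng_rng t := LiftFamily.ext (FΛ.G.rng_rng _) rfl
  comp_src_id t := by
    have hg := (FΛ.G.rng_src t.base).symm
    rw [compOrLeft_of_eq hpst hact hg]
    refine ext_of_overSrc (FΛ.G.comp_src_id _) fun w hw => ?_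
    have hw : OverSrc Ω FΛ p (FΛ.G.src t.base) w := (overSrc_comp_iff hg).1 hw
    rw [comp_lift hpst hact hg hw]
    change FΩ.G.comp (t.lift (act (FΛ.G.src t.base) w)) (FΩ.i w) = t.lift w
    rw [hact.act_of_src_eq (FΛ.G.src_src _) hw, ← t.src_lift w (overSrc_src_iff.1 hw),
      FΩ.G.comp_src_id]
  rng_comp_id t := by
    have hg := FΛ.G.src_rng t.base
    rw [compOrLeft_of_eq hpst hact hg]
    refine ext_of_overSrc (FΛ.G.rng_comp_id _) fun w hw => ?_
    have hw : OverSrc Ω FΛ p t.base w := (overSrc_comp_iff hg).1 hw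
    rw [comp_lift hpst hact hg hw]
    change FΩ.G.comp (FΩ.i (act t.base w)) (t.lift w) = t.lift w
    rw [← t.rng_lift w hw, FΩ.G.rng_comp_id]
  src_comp t s h := by
    have hg : FΛ.G.src t.base = FΛ.G.rng s.base := congrArg base h
    rw [compOrLeft_of_eq hpst hact hg]
    exact LiftFamily.ext (FΛ.G.src_comp _ _ hg) rfl
  rng_comp t s h := by
    have hg : FΛ.G.src t.base = FΛ.G.rng s.base := congrArg base h
    rw [compOrLeft_of_eq hpst hact hg]
    exact LiftFamily.ext (FΛ.G.rng_comp _ _ hg) rfl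
  assoc t s u hts hsu := by
    have hg₁ : FΛ.G.src t.base = FΛ.G.rng s.base := congrArg base hts
    have hg₂ : FΛ.G.src s.base = FΛ.G.rng u.base := congrArg base hsu
    have hg₃ : FΛ.G.src (FΛ.G.comp t.base s.base) = FΛ.G.rng u.base := by
      rw [FΛ.G.src_comp _ _ hg₁, hg₂]
    have hg₄ : FΛ.G.src t.base = FΛ.G.rng (FΛ.G.comp s.base u.base) := by
      rw [FΛ.G.rng_comp _ _ hg₂, hg₁]
    rw [compOrLeft_of_eq hpst hact hg₁, compOrLeft_of_eq hpst hact hg₂,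
      compOrLeft_of_eq hpst hact hg₃, compOrLeft_of_eq hpst hact hg₄]
    refine ext_of_overSrc (FΛ.G.assoc _ _ _ hg₁ hg₂) fun w hw => ?_
    have hw : OverSrc Ω FΛ p u.base w := (overSrc_comp_iff hg₃).1 hw
    have hw' := hact.overSrc_act hw hg₂
    have hw'' := hact.overSrc_act hw' hg₁
    rw [comp_lift hpst hact hg₃ hw,
      comp_lift (s := comp hpst hact s u hg₂) hpst hact hg₄ ((overSrc_comp_iff hg₂).2 hw),
      comp_lift hpst hact hg₁ hw', comp_lift hpst hact hg₂ hw, comp_base,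
      hact.act_comp _ _ w hw.1 hw.2 hg₂]
    exact FΩ.G.assoc _ _ _ (by rw [t.src_lift _ hw'', s.rng_lift _ hw'])
      (by rw [s.src_lift _ hw', u.rng_lift _ hw])
  src_inv t := LiftFamily.ext (FΛ.G.src_inv _) rfl
  rng_inv t := LiftFamily.ext (FΛ.G.rng_inv _) rfl
  inv_comp_self t := by
    have hg := FΛ.G.src_inv t.base
    rw [compOrLeft_of_eq hpst hact hg]
    refine ext_of_overSrc (FΛ.G.inv_comp_self _) fun w hw => ?_
    have hw : OverSrc Ω FΛ p t.base w := (overSrc_comp_iff hg).1 hw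
    rw [comp_lift hpst hact hg hw, inv_lift hpst hact (hact.overSrc_act hw hg),
      hact.act_inv_act hw, FΩ.G.inv_comp_self, t.src_lift w hw]
    rfl
  comp_inv_self t := by
    have hg := (FΛ.G.rng_inv t.base).symm
    rw [compOrLeft_of_eq hpst hact hg]
    refine ext_of_overSrc (FΛ.G.comp_inv_self _) fun w hw => ?_
    have hw : OverSrc Ω FΛ p (FΛ.G.inv t.base) w := (overSrc_comp_iff hg).1 hw
    have hw' := hact.overSrc_act hw (FΛ.G.rng_inv _).symm
    rw [comp_lift hpst hact hg hw, inv_lift hpst hact hw, inv_base, FΩ.G.comp_inv_self,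
      t.rng_lift _ hw', hact.act_act_inv hw]
    rfl

theorem groupoid_comp {t s : LiftFamily FΛ FΩ p pst act}
    (h : FΛ.G.src t.base = FΛ.G.rng s.base) :
    (groupoid hpst hpsti hact).comp t s = comp hpst hact t s h :=
  compOrLeft_of_eq hpst hact h

theorem groupoid_inv (t : LiftFamily FΛ FΩ p pst act) :
    (groupoid hpst hpsti hact).inv t = inv hpst hact t :=
  rfl

open scoped Classical in
noncomputable def ofArrow (hp : IsCovering Ω Λ p) (α : A) : LiftFamily FΛ FΩ p pst act where
  base := FΛ.i α
  lift w := if h : ∃ l, Ω.src l = w ∧ p l = α then FΩ.i h.choose else FΩ.i w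
  src_lift w hw := by
    have h := (overSrc_i_iff hp).1 hw
    rw [dif_pos h, ← FΩ.i_hom.1, h.choose_spec.1]
  rng_lift w hw := by
    have h := (overSrc_i_iff hp).1 hw
    rw [dif_pos h, ← FΩ.i_hom.2.1, ← hact.act_cov, h.choose_spec.1, h.choose_spec.2]
  pst_lift w hw := by
    have h := (overSrc_i_iff hp).1 hw
    rw [dif_pos h, hpsti, h.choose_spec.2]
  lift_of_not w hw := dif_neg fun h => hw ((overSrc_i_iff hp).2 h)

theorem ofArrow_lift_src (hp : IsCovering Ω Λ p) (l : A') :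
    (ofArrow hpsti hact hp (p l)).lift (Ω.src l) = FΩ.i l := by
  have h : ∃ l', Ω.src l' = Ω.src l ∧ p l' = p l := ⟨l, rfl, rfl⟩
  exact (dif_pos h).trans (congrArg FΩ.i (hp.src_inj _ _ h.choose_spec.1 h.choose_spec.2))

theorem ofArrow_lift_of_isVertex (hp : IsCovering Ω Λ p) {e : A} (he : Λ.IsVertex e) {w : A'}
    (hw : OverSrc Ω FΛ p (FΛ.i e) w) : (ofArrow hpsti hact hp e).lift w = FΩ.i w := by
  obtain ⟨l, rfl, rfl⟩ := (overSrc_i_iff hp).1 hw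
  have hsrc := ofArrow_lift_src hpsti hact hp (Ω.src l)
  rwa [Ω.src_src, hp.hom.1, he] at hsrc

theorem isFunctorToGpdFun_ofArrow (hp : IsCovering Ω Λ p) :
    IsFunctorToGpdFun Λ (groupoid hpst hpsti hact) (ofArrow hpsti hact hp) := by
  refine ⟨fun α => ?_, fun α => ?_, fun α β h => ?_⟩
  · exact ext_of_overSrc (FΛ.i_hom.1 α)
      fun w hw => ofArrow_lift_of_isVertex hpsti hact hp (Λ.src_src α) hw
  · exact ext_of_overSrc (FΛ.i_hom.2.1 α)
      fun w hw => ofArrow_lift_of_isVertex hpsti hact hp (Λ.src_rng α) hw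
  have hg : FΛ.G.src (FΛ.i α) = FΛ.G.rng (FΛ.i β) := by rw [← FΛ.i_hom.1, ← FΛ.i_hom.2.1, h]
  rw [groupoid_comp (t := ofArrow hpsti hact hp α) (s := ofArrow hpsti hact hp β)
    hpst hpsti hact hg]
  refine ext_of_overSrc (FΛ.i_hom.2.2 α β h) fun w hw => ?_
  change OverSrc Ω FΛ p (FΛ.i (Λ.comp α β)) w at hw
  rw [FΛ.i_hom.2.2 α β h, overSrc_comp_iff hg] at hw
  obtain ⟨l, rfl, rfl⟩ := (overSrc_i_iff hp).1 hw
  obtain ⟨m, hml, rfl⟩ := hp.src_lift (Ω.rng l) (Ω.src_rng l) α (by rw [h, ← hp.hom.2.1])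
  have hcomp := ofArrow_lift_src hpsti hact hp (Ω.comp m l)
  rw [Ω.src_comp m l hml, hp.hom.2.2.1 m l hml, FΩ.i_hom.2.2 m l hml] at hcomp
  rw [hcomp, comp_lift hpst hact hg hw]
  change _ = FΩ.G.comp ((ofArrow hpsti hact hp (p m)).lift (act (FΛ.i (p l)) (Ω.src l))) _
  rw [hact.act_cov, ← hml, ofArrow_lift_src, ofArrow_lift_src]

theorem isGpdHomFun_base :
    IsGpdHomFun (groupoid hpst hpsti hact) FΛ.G (base (pst := pst) (act := act)) :=
  ⟨fun _ => rfl, fun _ => rfl, fun t s h => by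
    rw [groupoid_comp hpst hpsti hact (congrArg base h)]
    rfl⟩

theorem exists_isGpdHomFun_ofArrow (hp : IsCovering Ω Λ p) :
    ∃ Φ : FΛ.B → LiftFamily FΛ FΩ p pst act, IsGpdHomFun FΛ.G (groupoid hpst hpsti hact) Φ ∧
      (∀ α, Φ (FΛ.i α) = ofArrow hpsti hact hp α) ∧ ∀ a, (Φ a).base = a := by
  obtain ⟨Φ, ⟨hΦ, hΦi⟩, -⟩ := FΛ.univ _ _ (isFunctorToGpdFun_ofArrow hpst hpsti hact hp)
  refine ⟨Φ, hΦ, hΦi, congrFun (FΛ.hom_ext ((isGpdHomFun_base hpst hpsti hact).comp hΦ)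
    isGpdHomFun_id fun α => ?_)⟩
  rw [hΦi]
  rfl

end LiftFamily

open LiftFamily

theorem lift_pst_eq (hp : IsCovering Ω Λ p) (hpst : IsGpdHomFun FΩ.G FΛ.G pst)
    (hpsti : ∀ a, pst (FΩ.i a) = FΛ.i (p a)) (hact : CorrespondingAction Ω Λ FΛ p act)
    {Φ : FΛ.B → LiftFamily FΛ FΩ p pst act} (hΦ : IsGpdHomFun FΛ.G (groupoid hpst hpsti hact) Φ)
    (hΦi : ∀ α, Φ (FΛ.i α) = ofArrow hpsti hact hp α) (hbase : ∀ a, (Φ a).base = a)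
    (c : FΩ.B) : ∀ w, Ω.IsVertex w → FΩ.G.src c = FΩ.i w → (Φ (pst c)).lift w = c := by
  induction c using FΩ.induction_on with
  | base l =>
    intro w hw hl
    obtain rfl : Ω.src l = w := FΩ.i_inj (Ω.src_src l) hw (by rw [FΩ.i_hom.1, hl])
    rw [hpsti, hΦi, ofArrow_lift_src]
  | comp c₁ c₂ hg ih₁ ih₂ =>
    intro w hw hc
    have hc₂ : FΩ.G.src c₂ = FΩ.i w := by rw [← FΩ.G.src_comp _ _ hg, hc]
    have hov : OverSrc Ω FΛ p (Φ (pst c₂)).base w := ⟨hw, by rw [hbase, ← hpst.1, hc₂, hpsti]⟩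
    have hgΛ : FΛ.G.src (pst c₁) = FΛ.G.rng (pst c₂) := by rw [← hpst.1, ← hpst.2.1, hg]
    have hgΦ : FΛ.G.src (Φ (pst c₁)).base = FΛ.G.rng (Φ (pst c₂)).base := by
      rw [hbase, hbase, hgΛ]
    have hrng : FΩ.i (act (pst c₂) w) = FΩ.G.src c₁ := by
      have h := (Φ (pst c₂)).rng_lift w hov
      rw [ih₂ w hw hc₂, hbase] at h
      rw [hg, h]
    have hw₁ : Ω.IsVertex (act (pst c₂) w) := (hact.act_vertex _ _ hw (hbase (pst c₂) ▸ hov.2)).1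
    rw [hpst.2.2 _ _ hg, hΦ.2.2 _ _ hgΛ, groupoid_comp hpst hpsti hact hgΦ,
      comp_lift hpst hact hgΦ hov, ih₂ w hw hc₂, hbase, ih₁ _ hw₁ hrng.symm]
  | inv c ih =>
    intro w hw hc
    obtain ⟨w₀, ⟨hw₀, hc₀⟩, -⟩ := FΩ.obj_bij (FΩ.G.src c) (FΩ.G.src_src c)
    have hov : OverSrc Ω FΛ p (pst c) w₀ := ⟨hw₀, by rw [← hpst.1, ← hc₀, hpsti]⟩
    have hact₀ : act (pst c) w₀ = w := by
      refine FΩ.i_inj (hact.act_vertex _ _ hw₀ hov.2).1 hw ?_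
      rw [← hbase (pst c), ← (Φ _).rng_lift w₀ (by rwa [hbase]), ih w₀ hw₀ hc₀.symm,
        ← FΩ.G.src_inv, hc]
    have hov' : OverSrc Ω FΛ p (FΛ.G.inv (Φ (pst c)).base) w := by
      rw [hbase, ← hact₀]
      exact hact.overSrc_act hov (FΛ.G.src_inv _)
    rw [hpst.map_inv, hΦ.map_inv, groupoid_inv, inv_lift hpst hact hov', hbase, ← hact₀,
      hact.act_inv_act hov, ih w₀ hw₀ hc₀.symm]

theorem exists_lift (hp : IsCovering Ω Λ p) (hpst : IsGpdHomFun FΩ.G FΛ.G pst)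
    (hpsti : ∀ a, pst (FΩ.i a) = FΛ.i (p a)) (hact : CorrespondingAction Ω Λ FΛ p act)
    {a : FΛ.B} {w : A'} (h : OverSrc Ω FΛ p a w) :
    ∃ c, FΩ.G.src c = FΩ.i w ∧ FΩ.G.rng c = FΩ.i (act a w) ∧ pst c = a := by
  obtain ⟨Φ, -, -, hbase⟩ := exists_isGpdHomFun_ofArrow hpst hpsti hact hp
  have h' : OverSrc Ω FΛ p (Φ a).base w := by rwa [hbase]
  refine ⟨(Φ a).lift w, (Φ a).src_lift w h', ?_, ?_⟩
  · rw [(Φ a).rng_lift w h', hbase]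
  · rw [(Φ a).pst_lift w h', hbase]

theorem eq_of_pst_eq (hp : IsCovering Ω Λ p) (hpst : IsGpdHomFun FΩ.G FΛ.G pst)
    (hpsti : ∀ a, pst (FΩ.i a) = FΛ.i (p a)) (hact : CorrespondingAction Ω Λ FΛ p act)
    {c c' : FΩ.B} {w : A'} (hw : Ω.IsVertex w) (hc : FΩ.G.src c = FΩ.i w)
    (hc' : FΩ.G.src c' = FΩ.i w) (h : pst c = pst c') : c = c' := by
  obtain ⟨Φ, hΦ, hΦi, hbase⟩ := exists_isGpdHomFun_ofArrow hpst hpsti hact hp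
  rw [← lift_pst_eq hp hpst hpsti hact hΦ hΦi hbase c w hw hc,
    ← lift_pst_eq hp hpst hpsti hact hΦ hΦi hbase c' w hw hc', h]

end Covering

theorem pstar_iso_onto_stability_general {k : ℕ} {A A' : Type}
    (Λ : KGraphStruct k A) (Ω : KGraphStruct k A')
    (FΛ : FundamentalGroupoid Λ) (FΩ : FundamentalGroupoid Ω)
    (p : A' → A) (hp : IsCovering Ω Λ p)
    (pst : FΩ.B → FΛ.B) (hpst : IsGpdHomFun FΩ.G FΛ.G pst)
    (hpsti : ∀ a, pst (FΩ.i a) = FΛ.i (p a))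
    (act : FΛ.B → A' → A') (hact : CorrespondingAction Ω Λ FΛ p act)
    (x : A) (v : A') (hv : Ω.IsVertex v) (hpv : p v = x) :
    (∀ c ∈ FΩ.pi1 v, ∀ c' ∈ FΩ.pi1 v, pst c = pst c' → c = c') ∧
    pst '' FΩ.pi1 v =
      {a | FΛ.G.src a = FΛ.i x ∧ FΛ.G.rng a = FΛ.i x ∧ act a v = v} := by
  refine ⟨fun c hc c' hc' h => eq_of_pst_eq hp hpst hpsti hact hv hc.1 hc'.1 h,
    Set.Subset.antisymm ?_ ?_⟩
  · rintro _ ⟨c, ⟨hcs, hcr⟩, rfl⟩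
    have hov : OverSrc Ω FΛ p (pst c) v := ⟨hv, by rw [← hpst.1, hcs, hpsti]⟩
    obtain ⟨c₀, hc₀s, hc₀r, hc₀p⟩ := exists_lift hp hpst hpsti hact hov
    obtain rfl : c₀ = c := eq_of_pst_eq hp hpst hpsti hact hv hc₀s hcs hc₀p
    refine ⟨by rw [hov.2, hpv], by rw [← hpst.2.1, hcr, hpsti, hpv], ?_⟩
    exact FΩ.i_inj (hact.act_vertex _ _ hv hov.2).1 hv (hc₀r.symm.trans hcr)
  · rintro a ⟨has, -, hav⟩
    obtain ⟨c, hcs, hcr, rfl⟩ := exists_lift hp hpst hpsti hact ⟨hv, by rw [has, hpv]⟩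
    exact ⟨c, ⟨hcs, by rw [hcr, hav]⟩, rfl⟩

/-- For a covering `p : Ω → Λ`, `x ∈ Λ⁰` and `v ∈ p⁻¹(x)`,
the induced functor `p₊` maps the fundamental group `π(Ω,v)` isomorphically
onto the stability group `S_v = {a ∈ π(Λ,x) : a·v = v}` of the corresponding
action of `𝒢(Λ)` on `Ω⁰`: it is injective on `π(Ω,v)` and its image is
exactly `S_v`. -/
theorem pstar_iso_onto_stability {k : ℕ} {A A' : Type}
    (Λ : KGraphStruct k A) (Ω : KGraphStruct k A')
    (FΛ : FundamentalGroupoid Λ) (FΩ : FundamentalGroupoid Ω)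
    (p : A' → A) (hp : IsCovering Ω Λ p)
    (pst : FΩ.B → FΛ.B) (hpst : IsGpdHomFun FΩ.G FΛ.G pst)
    (hpsti : ∀ a, pst (FΩ.i a) = FΛ.i (p a))
    (act : FΛ.B → A' → A') (hact : CorrespondingAction Ω Λ FΛ p act)
    (x : A) (hx : Λ.IsVertex x) (v : A') (hv : Ω.IsVertex v) (hpv : p v = x) :
    (∀ c ∈ FΩ.pi1 v, ∀ c' ∈ FΩ.pi1 v, pst c = pst c' → c = c') ∧
    pst '' FΩ.pi1 v =
      {a | FΛ.G.src a = FΛ.i x ∧ FΛ.G.rng a = FΛ.i x ∧ act a v = v} :=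
  pstar_iso_onto_stability_general Λ Ω FΛ FΩ p hp pst hpst hpsti act hact x v hv hpv

end KGraphCovering
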